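/- arXiv:2512.12391 — 2 statements merged into one kernel-verified Lean document; each statement's English description precedes it below -/
import Mathlib

section
/- Let P be a convex polyhedron in ℝ^3 with P ⊆ [0,1]^3 and vol(P) ≥ 1/15. Then there exists a translation v ∈ ℝ^3 such that the cube (1/107)·[0,1]^3 + v is contained in P. -/
/-!
Eroding a convex body `A ⊆ [0,1]^n` along a vector `v = s eᵢ`, i.e. passing to
`{x ∈ A | x + v ∈ A}`, costs at most `s` of volume: the translates of the exit set
`A \ (A - v)` by `0, v, 2v, …` are pairwise disjoint by convexity and all lie in a box of
volume `1 + N s`. After eroding along the `n` coordinate axes, a body of volume more than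
`n s` keeps a point `x` with all `2ⁿ` vertices of `x + s [0,1]^n` in `A`, and convexity
fills in the cube. For `n = 3` and `s = 1/107` this needs only `3/107 < 1/15`.
-/

open Function MeasureTheory Set
open scoped Pointwise

section Erosion

variable {E : Type*} [AddCommGroup E]

def erosion (A V : Set E) : Set E := {x | ∀ v ∈ V, x + v ∈ A}

lemma erosion_add (A V W : Set E) : erosion A (V + W) = erosion (erosion A V) W := by
  ext x
  refine ⟨fun hx w hw v hv => ?_, ?_⟩
  · simpa [add_assoc, add_comm w] using hx _ (add_mem_add hv hw)
  · rintro hx _ ⟨v, hv, w, hw, rfl⟩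
    simpa [add_assoc, add_comm w] using hx w hw v hv

lemma erosion_pair_zero (A : Set E) (v : E) : erosion A {0, v} = A ∩ (· + v) ⁻¹' A := by
  ext x
  simp [erosion]

lemma erosion_subset {A V : Set E} (hV : (0 : E) ∈ V) : erosion A V ⊆ A := fun x hx => by
  simpa using hx 0 hV

variable [Module ℝ E] {A : Set E}

lemma convex_erosion (hA : Convex ℝ A) (V : Set E) : Convex ℝ (erosion A V) := by
  intro x hx y hy a b ha hb hab v hv
  convert hA (hx v hv) (hy v hv) ha hb hab using 1
  rw [smul_add, smul_add, add_add_add_comm, ← add_smul, hab, one_smul]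

lemma erosion_convexHull (hA : Convex ℝ A) (V : Set E) :
    erosion A (convexHull ℝ V) = erosion A V := by
  refine subset_antisymm (fun x hx v hv => hx v (subset_convexHull ℝ V hv)) fun x hx => ?_
  exact convexHull_min hx (hA.translate_preimage_right x)

lemma Convex.pairwise_disjoint_nsmul_vadd_sdiff (hA : Convex ℝ A) (v : E) :
    Pairwise (Disjoint on fun k : ℕ => k • v +ᵥ (A \ (· + v) ⁻¹' A)) := by
  refine (pairwise_disjoint_on _).2 fun k j hkj => disjoint_left.2 ?_
  rintro _ ⟨a, ⟨ha, -⟩, rfl⟩ ⟨b, ⟨hb, hbv⟩, hab⟩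
  obtain ⟨m, rfl⟩ := Nat.exists_eq_add_of_lt hkj
  have hm : (m : ℝ) + 1 ≠ 0 := by positivity
  have hba : b + ((m + 1 : ℕ) : ℝ) • v ∈ A := by
    convert ha using 1
    rw [Nat.cast_smul_eq_nsmul]
    simp only [vadd_eq_add, add_nsmul, add_assoc, add_right_inj] at hab
    rw [← hab, add_nsmul]
    abel
  refine hbv ?_
  simpa [smul_smul, hm] using hA.add_smul_mem hb hba (t := ((m + 1 : ℕ) : ℝ)⁻¹)
    ⟨by positivity, inv_le_one_of_one_le₀ (by simp)⟩

end Erosion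

section Haar

variable {E : Type*} [NormedAddCommGroup E] [NormedSpace ℝ E] [FiniteDimensional ℝ E]
  [MeasurableSpace E] [BorelSpace E] (μ : Measure E) [μ.IsAddHaarMeasure] {A : Set E}

lemma Convex.natCast_mul_measure_sdiff_le (hA : Convex ℝ A) (v : E) (N : ℕ) :
    N * μ (A \ (· + v) ⁻¹' A) ≤ μ (⋃ k ∈ Finset.range N, k • v +ᵥ A) := by
  have hD (k : ℕ) : NullMeasurableSet (k • v +ᵥ (A \ (· + v) ⁻¹' A)) μ := by
    rw [vadd_set_sdiff]
    exact ((hA.vadd _).nullMeasurableSet μ).diff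
      (((hA.translate_preimage_left v).vadd _).nullMeasurableSet μ)
  calc (N : ENNReal) * μ (A \ (· + v) ⁻¹' A)
      = ∑ k ∈ Finset.range N, μ (k • v +ᵥ (A \ (· + v) ⁻¹' A)) := by simp [measure_vadd]
    _ = μ (⋃ k ∈ Finset.range N, k • v +ᵥ (A \ (· + v) ⁻¹' A)) :=
      (measure_biUnion_finset₀
        (fun _ _ _ _ hkj => (hA.pairwise_disjoint_nsmul_vadd_sdiff v hkj).aedisjoint)
        fun k _ => hD k).symm
    _ ≤ _ := measure_mono (iUnion₂_mono fun k _ => vadd_set_mono sdiff_subset)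

end Haar

lemma ENNReal.le_of_forall_natCast_mul_le_add {a b c : ENNReal} (hc : c ≠ ⊤)
    (h : ∀ N : ℕ, N * a ≤ c + N * b) : a ≤ b := by
  refine ENNReal.le_of_forall_pos_le_add fun ε hε _ => ?_
  obtain ⟨N, hN⟩ := ENNReal.exists_nat_mul_gt (a := ε) (by positivity) hc
  have hN0 : (N : ENNReal) ≠ 0 := by rintro h; simp [h] at hN
  refine (ENNReal.mul_le_mul_iff_right hN0 (by simp)).1 ?_
  calc N * a ≤ c + N * b := h N
    _ ≤ N * ε + N * b := by gcongr
    _ = N * (b + ε) := by ring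

section Cube

variable {ι : Type*} [Fintype ι]

def unitCube (ι : Type*) [Fintype ι] : Set (EuclideanSpace ℝ ι) := {x | ∀ i, x i ∈ Icc 0 1}

lemma EuclideanSpace.volume_setOf_forall_mem_Icc (a b : ι → ℝ) :
    volume {x : EuclideanSpace ℝ ι | ∀ i, x i ∈ Icc (a i) (b i)}
      = ∏ i, ENNReal.ofReal (b i - a i) := by
  have hbox : {x : EuclideanSpace ℝ ι | ∀ i, x i ∈ Icc (a i) (b i)}
      = WithLp.ofLp ⁻¹' Icc a b := by
    ext x
    simp [Pi.le_def, forall_and]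
  rw [hbox, (PiLp.volume_preserving_ofLp ι).measure_preimage measurableSet_Icc.nullMeasurableSet,
    Real.volume_Icc_pi]

variable [DecidableEq ι] {A : Set (EuclideanSpace ℝ ι)}

lemma volume_iUnion_nsmul_vadd_le (hA : A ⊆ unitCube ι) (i : ι) {s : ℝ} (hs : 0 ≤ s) (N : ℕ) :
    volume (⋃ k ∈ Finset.range N, k • (s • EuclideanSpace.single i (1 : ℝ)) +ᵥ A)
      ≤ ENNReal.ofReal (1 + N * s) := by
  set b : ι → ℝ := update 1 i (1 + N * s)
  calc _ ≤ volume {x : EuclideanSpace ℝ ι | ∀ m, x m ∈ Icc 0 (b m)} := by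
        refine measure_mono ?_
        simp only [subset_def, mem_iUnion, Finset.mem_range]
        rintro _ ⟨k, hk, a, ha, rfl⟩ m
        have hkN : (k : ℝ) * s ≤ N * s := by gcongr
        have ham := hA ha m
        by_cases hm : m = i
        · subst hm
          simp only [mem_Icc, vadd_eq_add, PiLp.add_apply, PiLp.smul_apply, PiLp.single_eq_same,
            smul_eq_mul, mul_one, nsmul_eq_mul, b, update_self] at ham ⊢
          exact ⟨add_nonneg (by positivity) ham.1, by linarith⟩
        · simpa [b, hm] using ham
    _ = ∏ m, ENNReal.ofReal (b m - 0) := EuclideanSpace.volume_setOf_forall_mem_Icc 0 b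
    _ = _ := by
        rw [Finset.prod_eq_single i (fun j _ hj => by simp [b, hj]) (by simp)]
        simp [b]

lemma Convex.volume_sdiff_preimage_add_single_le (hA : Convex ℝ A) (hAc : A ⊆ unitCube ι) (i : ι)
    {s : ℝ} (hs : 0 ≤ s) :
    volume (A \ (· + s • EuclideanSpace.single i (1 : ℝ)) ⁻¹' A) ≤ ENNReal.ofReal s := by
  refine ENNReal.le_of_forall_natCast_mul_le_add ENNReal.one_ne_top fun N => ?_
  calc _ ≤ _ := hA.natCast_mul_measure_sdiff_le volume _ N
    _ ≤ ENNReal.ofReal (1 + N * s) := volume_iUnion_nsmul_vadd_le hAc i hs N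
    _ = 1 + N * ENNReal.ofReal s := by
      rw [ENNReal.ofReal_add zero_le_one (by positivity), ENNReal.ofReal_mul (by positivity)]
      simp

lemma Convex.volume_le_volume_erosion_pair_add (hA : Convex ℝ A) (hAc : A ⊆ unitCube ι) (i : ι)
    {s : ℝ} (hs : 0 ≤ s) :
    volume A ≤ volume (erosion A {0, s • EuclideanSpace.single i (1 : ℝ)}) + ENNReal.ofReal s := by
  rw [erosion_pair_zero]
  exact (measure_le_inter_add_sdiff _ _ _).trans
    (add_le_add_right (hA.volume_sdiff_preimage_add_single_le hAc i hs) _)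

lemma Convex.volume_le_volume_erosion_sum_add (hA : Convex ℝ A) (hAc : A ⊆ unitCube ι) {s : ℝ}
    (hs : 0 ≤ s) (S : Finset ι) :
    volume A ≤ volume (erosion A (∑ i ∈ S, {0, s • EuclideanSpace.single i (1 : ℝ)}))
      + S.card * ENNReal.ofReal s := by
  induction S using Finset.induction_on with
  | empty => simp [erosion]
  | insert j S hj ih =>
    set B := erosion A (∑ i ∈ S, {0, s • EuclideanSpace.single i (1 : ℝ)})
    have hBA : B ⊆ A := erosion_subset <| by
      simpa using finsetSum_mem_finsetSum S (fun i => {0, s • EuclideanSpace.single i (1 : ℝ)})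
        (fun _ => 0) fun i _ => mem_insert 0 _
    rw [Finset.sum_insert hj, add_comm _ (∑ i ∈ S, _), erosion_add,
      Finset.card_insert_of_notMem hj]
    calc volume A ≤ volume B + S.card * ENNReal.ofReal s := ih
      _ ≤ volume (erosion B {0, s • EuclideanSpace.single j (1 : ℝ)}) + ENNReal.ofReal s
          + S.card * ENNReal.ofReal s := by
        gcongr
        exact (convex_erosion hA _).volume_le_volume_erosion_pair_add (hBA.trans hAc) j hs
      _ = _ := by push_cast; ring

lemma smul_unitCube_subset_sum_segment (s : ℝ) :
    s • unitCube ι ⊆ ∑ i, segment ℝ 0 (s • EuclideanSpace.single i (1 : ℝ)) := by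
  rintro _ ⟨y, hy, rfl⟩
  refine (mem_finsetSum _ _ _).2
    ⟨fun i => y i • s • EuclideanSpace.single i 1, fun {i} _ => ?_, ?_⟩
  · exact ⟨1 - y i, y i, sub_nonneg.2 (hy i).2, (hy i).1, sub_add_cancel _ _, by simp⟩
  · ext m
    simp [Pi.single_apply, mul_comm]

theorem Convex.exists_add_smul_unitCube_subset (hA : Convex ℝ A) (hAc : A ⊆ unitCube ι) {s : ℝ}
    (hs : 0 ≤ s) (hvol : ENNReal.ofReal (Fintype.card ι * s) < volume A) :
    ∃ x, (fun y => s • y + x) '' unitCube ι ⊆ A := by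
  obtain ⟨x, hx⟩ :
      (erosion A (∑ i, {0, s • EuclideanSpace.single i (1 : ℝ)})).Nonempty := by
    refine nonempty_of_measure_ne_zero (μ := volume) fun h0 => hvol.not_ge ?_
    simpa [h0, ENNReal.ofReal_mul] using hA.volume_le_volume_erosion_sum_add hAc hs Finset.univ
  rw [← erosion_convexHull hA, convexHull_sum] at hx
  refine ⟨x, ?_⟩
  rintro _ ⟨y, hy, rfl⟩
  show s • y + x ∈ A
  rw [add_comm]
  exact hx _ <| by
    simpa [convexHull_pair] using smul_unitCube_subset_sum_segment s (smul_mem_smul_set hy)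

end Cube

theorem small_cube_in_large_convex_subset_of_cube_general (P : Set (EuclideanSpace ℝ (Fin 3)))
    (hPconv : Convex ℝ P)
    (hPsub : P ⊆ {x : EuclideanSpace ℝ (Fin 3) | ∀ i, x i ∈ Set.Icc (0 : ℝ) 1})
    (hvol : ENNReal.ofReal (1 / 15) ≤ MeasureTheory.volume P) :
    ∃ v : EuclideanSpace ℝ (Fin 3),
      (fun x : EuclideanSpace ℝ (Fin 3) => (1 / 107 : ℝ) • x + v) ''
          {x : EuclideanSpace ℝ (Fin 3) | ∀ i, x i ∈ Set.Icc (0 : ℝ) 1} ⊆ P :=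
  hPconv.exists_add_smul_unitCube_subset hPsub (by norm_num) <|
    (ENNReal.ofReal_lt_ofReal_iff (by norm_num)).2 (by norm_num) |>.trans_le hvol

/-- Let `P` be a convex polyhedron (here: a compact convex set) in `ℝ³` with
`P ⊆ [0,1]^3` and `vol(P) ≥ 1/15`.  Then there exists a translation `v ∈ ℝ³` such
that `(1/107)·[0,1]^3 + v ⊆ P`. -/
theorem small_cube_in_large_convex_subset_of_cube (P : Set (EuclideanSpace ℝ (Fin 3)))
    (hPconv : Convex ℝ P) (hPcomp : IsCompact P)
    (hPsub : P ⊆ {x : EuclideanSpace ℝ (Fin 3) | ∀ i, x i ∈ Set.Icc (0 : ℝ) 1})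
    (hvol : ENNReal.ofReal (1 / 15) ≤ MeasureTheory.volume P) :
    ∃ v : EuclideanSpace ℝ (Fin 3),
      (fun x : EuclideanSpace ℝ (Fin 3) => (1 / 107 : ℝ) • x + v) ''
          {x : EuclideanSpace ℝ (Fin 3) | ∀ i, x i ∈ Set.Icc (0 : ℝ) 1} ⊆ P :=
  small_cube_in_large_convex_subset_of_cube_general P hPconv hPsub hvol
end

section
/- Let S be a finite set in ℝ^3, let B_opt(S) be a minimum-volume bounding box of S, and suppose B_ε is a box centered at the origin such that some translate of B_ε is contained in (ε/4)·B_opt(S) (a copy of B_opt scaled by ε/4). Let P be any set with conv(S) ⊆ P ⊆ conv(S) ⊕ B_ε. Then the minimum-volume bounding box of P has volume at most (1+ε/4)^3 · vol(B_opt(S)), and for 0 < ε ≤ 1 this is less than (1+ε)·vol(B_opt(S)). -/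
open scoped RealInnerProductSpace Pointwise

/-- A (possibly degenerate, arbitrarily oriented) box in `ℝ³`: the set
`{x0 + t₁b₁ + t₂b₂ + t₃b₃ : 0 ≤ tᵢ ≤ 1}` for pairwise orthogonal vectors `bᵢ`. -/
def IsBox (B : Set (EuclideanSpace ℝ (Fin 3))) : Prop :=
  ∃ (x0 : EuclideanSpace ℝ (Fin 3)) (b : Fin 3 → EuclideanSpace ℝ (Fin 3)),
    (∀ i j, i ≠ j → ⟪b i, b j⟫ = 0) ∧
    B = (fun t : Fin 3 → ℝ => x0 + ∑ i, t i • b i) '' Set.Icc (0 : Fin 3 → ℝ) 1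

/-- Let `S` be a finite set in `ℝ³` with minimum-volume bounding box `B_opt`, and
let `B_ε` be a box some translate of which is contained in a copy of `B_opt`
scaled by `ε/4`.  If `conv S ⊆ P ⊆ conv S ⊕ B_ε`, then `P` has a bounding box of
volume at most `(1+ε/4)^3·vol(B_opt)`, which for `0 < ε ≤ 1` is less than
`(1+ε)·vol(B_opt)` since `(1+ε/4)^3 < 1+ε`. -/
theorem bounding_box_of_fattened_hull (ε : ℝ) (hε0 : 0 < ε) (hε1 : ε ≤ 1)
    (S : Set (EuclideanSpace ℝ (Fin 3))) (hSfin : S.Finite)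
    (Bopt : Set (EuclideanSpace ℝ (Fin 3))) (hBopt : IsBox Bopt) (hSB : S ⊆ Bopt)
    (hmin : ∀ B : Set (EuclideanSpace ℝ (Fin 3)), IsBox B → S ⊆ B →
      MeasureTheory.volume Bopt ≤ MeasureTheory.volume B)
    (Bε : Set (EuclideanSpace ℝ (Fin 3))) (hBε : IsBox Bε)
    (htrans : ∃ v : EuclideanSpace ℝ (Fin 3),
      (fun x => x + v) '' Bε ⊆ (fun x : EuclideanSpace ℝ (Fin 3) => (ε / 4) • x) '' Bopt)
    (P : Set (EuclideanSpace ℝ (Fin 3)))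
    (hP1 : convexHull ℝ S ⊆ P) (hP2 : P ⊆ convexHull ℝ S + Bε) :
    (∃ B : Set (EuclideanSpace ℝ (Fin 3)), IsBox B ∧ P ⊆ B ∧
        MeasureTheory.volume B ≤
          ENNReal.ofReal ((1 + ε / 4) ^ 3) * MeasureTheory.volume Bopt) ∧
      (1 + ε / 4) ^ 3 < 1 + ε := by
  constructor
  · obtain ⟨v, hv⟩ := htrans
    obtain ⟨x0, b, hb, hBeq⟩ := hBopt
    set c : ℝ := 1 + ε / 4 with hc
    have hc0 : (0 : ℝ) < c := by rw [hc]; linarith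
    -- `Bopt` is convex
    have hconv : Convex ℝ Bopt := by
      let L : (Fin 3 → ℝ) →ₗ[ℝ] EuclideanSpace ℝ (Fin 3) :=
        { toFun := fun t => ∑ i, t i • b i
          map_add' := by intro x y; simp [add_smul, Finset.sum_add_distrib]
          map_smul' := by intro r x; simp [Finset.smul_sum, smul_smul] }
      have h1 : (fun t : Fin 3 → ℝ => x0 + ∑ i, t i • b i) '' Set.Icc 0 1
          = (fun z => x0 + z) '' (L '' Set.Icc 0 1) := by
        rw [Set.image_image]; rfl
      rw [hBeq, h1]
      exact ((convex_Icc _ _).linear_image L).translate x0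
    have hSBopt : convexHull ℝ S ⊆ Bopt := convexHull_min hSB hconv
    have hBεsub : ∀ x ∈ Bε, x + v ∈ (ε / 4) • Bopt := by
      intro x hx
      have := hv (Set.mem_image_of_mem _ hx)
      rwa [Set.image_smul] at this
    have hT : c • Bopt = Bopt + (ε / 4) • Bopt := by
      rw [hc, hconv.add_smul zero_le_one (by linarith : (0:ℝ) ≤ ε / 4), one_smul]
    refine ⟨(fun y => y + (-v)) '' (c • Bopt), ?_, ?_, ?_⟩
    · -- it is a box
      refine ⟨c • x0 + (-v), fun i => c • b i, ?_, ?_⟩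
      · intro i j hij
        rw [real_inner_smul_left, real_inner_smul_right, hb i j hij]; ring
      · rw [← Set.image_smul, hBeq, Set.image_image, Set.image_image]
        apply Set.image_congr'
        intro t
        rw [smul_add, Finset.smul_sum]
        simp_rw [smul_comm c]
        abel
    · -- contains P
      intro x hx
      obtain ⟨a, ha, e, he, hx'⟩ := Set.mem_add.mp (hP2 hx)
      have h1 : x + v ∈ c • Bopt := by
        rw [hT]
        have : x + v = a + (e + v) := by rw [← hx']; abel
        rw [this]
        exact Set.add_mem_add (hSBopt ha) (hBεsub e he)
      exact ⟨x + v, h1, add_neg_cancel_right x v⟩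
    · -- volume bound
      rw [Set.image_add_right, MeasureTheory.measure_preimage_add_right,
        MeasureTheory.Measure.addHaar_smul]
      rw [abs_of_pos (by positivity), finrank_euclideanSpace]
      simp
  · nlinarith [sq_nonneg ε, mul_pos hε0 hε0]
end
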